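/- Let g₀ be a positive definite symmetric 3×3 matrix, |ξ|₀ = (ξ·g₀ξ)^{1/2}, |v|₀′ = (v·g₀⁻¹v)^{1/2}. Define φ(ξ,η) = |ξ|₀ − |ξ−η|₀ + |η|₀ (the (+,+−) phase). Then for all ξ, η with ξ ≠ 0, η ≠ 0, ξ ≠ η, and |ξ|₀|ξ−η|₀ + ξ·g₀(ξ−η) ≠ 0: 2φ(ξ,η) = ((|ξ|₀ + |η|₀ + |ξ−η|₀)|ξ−η|₀|η|₀ / (|ξ|₀|ξ−η|₀ + ξ·g₀(ξ−η))) · |∇_ηφ(ξ,η)|₀′². -/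

import Mathlib

open scoped RealInnerProductSpace

noncomputable section

abbrev E3 := EuclideanSpace ℝ (Fin 3)

/-- The anisotropic norm `|x|₀ = (x · g₀ x)^{1/2}`. -/
def anorm (A : E3 →L[ℝ] E3) (x : E3) : ℝ := Real.sqrt ⟪A x, x⟫

lemma anorm_pos (A : E3 →L[ℝ] E3) (hpos : ∀ x : E3, x ≠ 0 → 0 < ⟪A x, x⟫)
    {x : E3} (hx : x ≠ 0) : 0 < anorm A x :=
  Real.sqrt_pos.mpr (hpos x hx)

lemma anorm_sq (A : E3 →L[ℝ] E3) (hpos : ∀ x : E3, x ≠ 0 → 0 < ⟪A x, x⟫)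
    {x : E3} (hx : x ≠ 0) : anorm A x * anorm A x = ⟪A x, x⟫ :=
  Real.mul_self_sqrt (hpos x hx).le

lemma hasGradientAt_anorm (A : E3 →L[ℝ] E3)
    (hsym : ∀ x y : E3, ⟪A x, y⟫ = ⟪x, A y⟫)
    (hpos : ∀ x : E3, x ≠ 0 → 0 < ⟪A x, x⟫)
    {x : E3} (hx : x ≠ 0) :
    HasGradientAt (anorm A) ((anorm A x)⁻¹ • A x) x := by
  rw [hasGradientAt_iff_hasFDerivAt]
  have hQ : HasFDerivAt (fun y : E3 => ⟪A y, y⟫)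
      ((fderivInnerCLM ℝ (A x, x)).comp ((A : E3 →L[ℝ] E3).prod (ContinuousLinearMap.id ℝ E3)))
      x := A.hasFDerivAt.inner ℝ (hasFDerivAt_id x)
  have h := hQ.sqrt (ne_of_gt (hpos x hx))
  convert h using 1
  · rfl
  · rfl
  ext v
  have hvx : ⟪A v, x⟫ = ⟪A x, v⟫ := by
    rw [hsym v x, real_inner_comm]
  have hax : (0:ℝ) < anorm A x := anorm_pos A hpos hx
  simp only [ContinuousLinearMap.coe_smul', Pi.smul_apply, ContinuousLinearMap.coe_comp',
    Function.comp_apply, ContinuousLinearMap.prod_apply, ContinuousLinearMap.coe_id', id_eq,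
    fderivInnerCLM_apply, InnerProductSpace.toDual_apply_apply, smul_eq_mul]
  rw [real_inner_smul_left, hvx]
  show (anorm A x)⁻¹ * ⟪A x, v⟫ = 1 / (2 * anorm A x) * (⟪A x, v⟫ + ⟪A x, v⟫)
  field_simp
  ring

/-- For the `(+,+−)` phase `φ(ξ,η) = |ξ|₀ − |ξ−η|₀ + |η|₀` one has
`2φ = ((|ξ|₀+|η|₀+|ξ−η|₀)|ξ−η|₀|η|₀/(|ξ|₀|ξ−η|₀+ξ·g₀(ξ−η))) |∇_ηφ|₀′²`,
where `|v|₀′² = v·g₀⁻¹v`, at points where the denominator does not vanish. -/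
theorem phase_identity_plus_plusminus (A B : E3 →L[ℝ] E3)
    (hsym : ∀ x y : E3, ⟪A x, y⟫ = ⟪x, A y⟫)
    (hpos : ∀ x : E3, x ≠ 0 → 0 < ⟪A x, x⟫)
    (hBA : ∀ x, B (A x) = x) (hAB : ∀ x, A (B x) = x)
    (ξ η : E3) (hξ : ξ ≠ 0) (hη : η ≠ 0) (hξη : ξ ≠ η)
    (hden : anorm A ξ * anorm A (ξ - η) + ⟪A ξ, ξ - η⟫ ≠ 0) :
    2 * (anorm A ξ - anorm A (ξ - η) + anorm A η)
      = ((anorm A ξ + anorm A η + anorm A (ξ - η)) * anorm A (ξ - η) * anorm A η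
            / (anorm A ξ * anorm A (ξ - η) + ⟪A ξ, ξ - η⟫))
          * ⟪gradient (fun η' => anorm A ξ - anorm A (ξ - η') + anorm A η') η,
              B (gradient (fun η' => anorm A ξ - anorm A (ξ - η') + anorm A η') η)⟫ := by
  have huz : ξ - η ≠ 0 := sub_ne_zero.mpr hξη
  set u : E3 := ξ - η with hu
  set p := anorm A ξ with hp
  set q := anorm A u with hq
  set r := anorm A η with hr
  have hppos : 0 < p := anorm_pos A hpos hξ
  have hqpos : 0 < q := anorm_pos A hpos huz
  have hrpos : 0 < r := anorm_pos A hpos hη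
  -- the gradient
  set g : E3 := q⁻¹ • A u + r⁻¹ • A η with hg
  have hgrad : gradient (fun η' => anorm A ξ - anorm A (ξ - η') + anorm A η') η = g := by
    have h1 : HasGradientAt (anorm A) (q⁻¹ • A u) u := hasGradientAt_anorm A hsym hpos huz
    have h2 : HasGradientAt (anorm A) (r⁻¹ • A η) η := hasGradientAt_anorm A hsym hpos hη
    have h1' := h1.hasFDerivAt
    have h2' := h2.hasFDerivAt
    have haff : HasFDerivAt (fun η' : E3 => ξ - η')
        (-(ContinuousLinearMap.id ℝ E3)) η := by
      exact (hasFDerivAt_id (𝕜 := ℝ) η).const_sub ξ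
    have hc1 : HasFDerivAt (fun η' : E3 => anorm A (ξ - η'))
        ((InnerProductSpace.toDual ℝ E3 (q⁻¹ • A u)).comp (-(ContinuousLinearMap.id ℝ E3))) η :=
      HasFDerivAt.comp (g := anorm A) (f := fun η' : E3 => ξ - η') η h1' haff
    have hF : HasFDerivAt (fun η' => anorm A ξ - anorm A (ξ - η') + anorm A η')
        (((0 : E3 →L[ℝ] ℝ) -
            (InnerProductSpace.toDual ℝ E3 (q⁻¹ • A u)).comp (-(ContinuousLinearMap.id ℝ E3))) +
          InnerProductSpace.toDual ℝ E3 (r⁻¹ • A η)) η :=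
      ((hasFDerivAt_const (anorm A ξ) η).sub hc1).add h2'
    have : HasGradientAt (fun η' => anorm A ξ - anorm A (ξ - η') + anorm A η') g η := by
      rw [hasGradientAt_iff_hasFDerivAt]
      convert hF using 1
      · rfl
      · rfl
      · rfl
      · rfl
      ext v
      simp [hg, InnerProductSpace.toDual_apply_apply, inner_add_left]
    exact this.gradient
  rw [hgrad]
  -- compute the inner product ⟪g, B g⟫
  have hBg : B g = q⁻¹ • u + r⁻¹ • η := by
    simp [hg, map_add, map_smul, hBA]
  have hc : ⟪A u, η⟫ = ⟪A η, u⟫ := by rw [hsym u η, real_inner_comm]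
  have hinner : ⟪g, B g⟫ = q⁻¹ * q⁻¹ * ⟪A u, u⟫ + 2 * (q⁻¹ * r⁻¹) * ⟪A u, η⟫
      + r⁻¹ * r⁻¹ * ⟪A η, η⟫ := by
    rw [hBg, hg]
    simp only [inner_add_left, inner_add_right, real_inner_smul_left, real_inner_smul_right]
    rw [← hc]
    ring
  rw [hinner]
  have hqu : ⟪A u, u⟫ = q * q := (anorm_sq A hpos huz).symm
  have hrη : ⟪A η, η⟫ = r * r := (anorm_sq A hpos hη).symm
  have hpξ : ⟪A ξ, ξ⟫ = p * p := (anorm_sq A hpos hξ).symm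
  -- relations between the inner products
  have hqsq : q * q = p * p - 2 * ⟪A ξ, η⟫ + r * r := by
    rw [← hqu, ← hrη, ← hpξ, hu]
    have h1 : ⟪A η, ξ⟫ = ⟪A ξ, η⟫ := by rw [hsym η ξ, real_inner_comm]
    simp only [map_sub, inner_sub_left, inner_sub_right]
    rw [h1]; ring
  have hd : ⟪A ξ, u⟫ = p * p - ⟪A ξ, η⟫ := by
    rw [hu, inner_sub_right, hpξ]
  have hc' : ⟪A u, η⟫ = ⟪A ξ, η⟫ - r * r := by
    rw [hu, map_sub, inner_sub_left, hrη]
  set c := ⟪A ξ, η⟫ with hcc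
  rw [hd] at hden
  rw [hqu, hrη, hc', hd]
  field_simp
  rw [eq_div_iff (by rw [sq]; exact hden)]
  linear_combination (-2*(p+r)) * hqsq
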